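/- Let r ∈ ℝ^d have all entries with pairwise distinct absolute values, and define the minimal gap Δ_r = min over pairs i≠j with r_i ≠ r_j of ||r_i| − |r_j||/2 > 0. Let a** > 0, and suppose coordinate 1 satisfies ||r_1| − 0.5a**| ≤ ||r_j| − 0.5a**| for all j ≥ 2 and |r_1| ≥ 0.5a**. Then for any a'' with a** − Δ_r ≤ a'' ≤ a** and a'' > 0, every coordinate j satisfies: |r_j| ≥ 0.5a** implies |r_j| ≥ 0.5a'', and |r_j| < 0.5a** implies |r_j| < 0.5a''. Consequently the rounding of r/a'' to {-1,0,1}^d coordinate-wise equals the rounding of r/a**. -/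

import Mathlib

/-- Coordinate-wise rounding to {-1,0,1}: sign(x) if |x| ≥ 1/2, else 0. -/
noncomputable def roundTernary (x : ℝ) : ℝ :=
  if x ≥ 1/2 then 1 else if x ≤ -(1/2) then -1 else 0

/-!
Rounding `r j / a` only depends on which side of the threshold `a / 2` the value `|r j|` lies.
Lowering the scale from `a**` to `a''` can therefore only change the rounding of an entry with
`a'' / 2 ≤ |r j| < a** / 2`. But the entry `r i0` closest to `a** / 2` lies above it and is
`2Δ`-separated from every other entry, so every entry below `a** / 2` lies below `a** / 2 - Δ`,
which is below `a'' / 2` since `a** - a'' ≤ Δ`.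
-/

theorem roundTernary_eq_ite_abs (x : ℝ) :
    roundTernary x = if 1 / 2 ≤ |x| then (SignType.sign x : ℝ) else 0 := by
  unfold roundTernary
  rcases lt_trichotomy x 0 with hx | rfl | hx
  · simp only [abs_of_neg hx, sign_neg hx]
    split_ifs <;> first | rfl | linarith
  · norm_num
  · simp only [abs_of_pos hx, sign_pos hx]
    split_ifs <;> first | rfl | linarith

theorem one_half_le_abs_div_iff {x c : ℝ} (hc : 0 < c) : 1 / 2 ≤ |x / c| ↔ c / 2 ≤ |x| := by
  rw [abs_div, abs_of_pos hc, le_div_iff₀ hc, one_div_mul_eq_div]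

theorem roundTernary_div_congr {x a b : ℝ} (ha : 0 < a) (hb : 0 < b)
    (h : a / 2 ≤ |x| ↔ b / 2 ≤ |x|) : roundTernary (x / a) = roundTernary (x / b) := by
  simp only [roundTernary_eq_ite_abs, one_half_le_abs_div_iff ha, one_half_le_abs_div_iff hb, h]
  simp only [div_eq_mul_inv x, sign_mul, sign_pos (inv_pos.2 ha), sign_pos (inv_pos.2 hb)]

theorem le_sub_of_abs_sub_le_abs_sub {x y t δ : ℝ} (hx : t ≤ x) (hy : y < t)
    (hclose : |x - t| ≤ |y - t|) (hsep : 2 * δ ≤ |x - y|) : y ≤ t - δ := by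
  rw [abs_of_nonneg (sub_nonneg.2 hx), abs_of_neg (sub_neg.2 hy)] at hclose
  rw [abs_of_pos (by linarith)] at hsep
  -- `x - y = (x - t) + (t - y) ≤ 2 (t - y)`
  linarith

theorem stmt_9_general (d : ℕ) (r : Fin d → ℝ) (Δ : ℝ) (hΔ : 0 < Δ)
    (hgap : ∀ i j, r i ≠ r j → 2 * Δ ≤ |(|r i| - |r j|)|)
    (astar : ℝ)
    (i0 : Fin d)
    (hmin : ∀ j, |(|r i0| - 0.5 * astar)| ≤ |(|r j| - 0.5 * astar)|)
    (hbig : 0.5 * astar ≤ |r i0|)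
    (a'' : ℝ) (ha1 : astar - Δ ≤ a'') (ha2 : a'' ≤ astar) (ha3 : 0 < a'') :
    (∀ j, (0.5 * astar ≤ |r j| → 0.5 * a'' ≤ |r j|) ∧
          (|r j| < 0.5 * astar → |r j| < 0.5 * a'')) ∧
    (∀ j, roundTernary (r j / a'') = roundTernary (r j / astar)) := by
  have hthreshold : ∀ j, (0.5 * astar ≤ |r j| → 0.5 * a'' ≤ |r j|) ∧
      (|r j| < 0.5 * astar → |r j| < 0.5 * a'') := by
    refine fun j ↦ ⟨fun hj ↦ by linarith, fun hj ↦ ?_⟩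
    have hne : r i0 ≠ r j := fun h ↦ by rw [h] at hbig; linarith
    have hfar := le_sub_of_abs_sub_le_abs_sub hbig hj (hmin j) (hgap i0 j hne)
    linarith
  refine ⟨hthreshold, fun j ↦ roundTernary_div_congr ha3 (ha3.trans_le ha2) ?_⟩
  obtain ⟨hup, hdown⟩ := hthreshold j
  have half_eq : ∀ c : ℝ, c / 2 = 0.5 * c := fun c ↦ by norm_num [div_eq_mul_inv, mul_comm]
  rw [half_eq, half_eq]
  exact ⟨fun h ↦ not_lt.1 fun h' ↦ (hdown h').not_ge h, hup⟩

/-- Stability of ternary rounding under a perturbation of the scale a** by at most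
the minimal gap Δ of r (entries of r having pairwise distinct absolute values). -/
theorem stmt_9 (d : ℕ) (r : Fin d → ℝ) (Δ : ℝ) (hΔ : 0 < Δ)
    (hdist : ∀ i j, i ≠ j → |r i| ≠ |r j|)
    (hgap : ∀ i j, r i ≠ r j → 2 * Δ ≤ |(|r i| - |r j|)|)
    (astar : ℝ) (hastar : 0 < astar)
    (i0 : Fin d)
    (hmin : ∀ j, |(|r i0| - 0.5 * astar)| ≤ |(|r j| - 0.5 * astar)|)
    (hbig : 0.5 * astar ≤ |r i0|)
    (a'' : ℝ) (ha1 : astar - Δ ≤ a'') (ha2 : a'' ≤ astar) (ha3 : 0 < a'') :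
    (∀ j, (0.5 * astar ≤ |r j| → 0.5 * a'' ≤ |r j|) ∧
          (|r j| < 0.5 * astar → |r j| < 0.5 * a'')) ∧
    (∀ j, roundTernary (r j / a'') = roundTernary (r j / astar)) :=
  stmt_9_general d r Δ hΔ hgap astar i0 hmin hbig a'' ha1 ha2 ha3
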